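/- In a Barr exact category C, let σ = (σ_⊤, σ_⊥) : f_E → f_B be a double extension, with kernel pairs (d_⊤, c_⊤) of σ_⊤ and (d_⊥, c_⊥) of σ_⊥ and induced morphism f : Eq(σ_⊤) → Eq(σ_⊥). Then, in the category Ext(C), the parallel pair (d_⊤, d_⊥), (c_⊤, c_⊥) : f ⇉ f_E is the kernel pair of σ : f_E → f_B, and σ is the coequalizer in Ext(C) of this pair; in particular, every double extension is a regular epimorphism in Ext(C). -/

import Mathlib

open CategoryTheory CategoryTheory.Limits

universe v u

namespace Paper

variable {C : Type u} [Category.{v} C]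

/-- `f` is a regular epimorphism. -/
def IsRegEpi {X Y : C} (f : X ⟶ Y) : Prop := Nonempty (RegularEpi f)

/-- A regular category: a finitely complete category with coequalizers of kernel pairs in
which regular epimorphisms are stable under pullback. -/
class RegularCat (C : Type u) [Category.{v} C] [HasFiniteLimits C] : Prop where
  hasCoeqOfKernelPairs : ∀ {X Y : C} (f : X ⟶ Y),
    HasCoequalizer (pullback.fst f f) (pullback.snd f f)
  regEpiPullbackStable : ∀ {X Y Z : C} (f : X ⟶ Y) (g : Z ⟶ Y),
    IsRegEpi f → IsRegEpi (pullback.snd f g)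

/-- An internal equivalence relation given by a parallel pair `r₁ r₂ : R ⟶ X`. -/
structure IsEquivRel [HasFiniteLimits C] {R X : C} (r₁ r₂ : R ⟶ X) : Prop where
  jointlyMono : Mono (prod.lift r₁ r₂)
  refl : ∃ d : X ⟶ R, d ≫ r₁ = 𝟙 X ∧ d ≫ r₂ = 𝟙 X
  symm : ∃ s : R ⟶ R, s ≫ r₁ = r₂ ∧ s ≫ r₂ = r₁
  trans : ∃ t : pullback r₂ r₁ ⟶ R,
    t ≫ r₁ = pullback.fst r₂ r₁ ≫ r₁ ∧ t ≫ r₂ = pullback.snd r₂ r₁ ≫ r₂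

/-- A Barr exact category: a regular category in which every internal equivalence relation
is effective (i.e. is a kernel pair). -/
class BarrExact (C : Type u) [Category.{v} C] [HasFiniteLimits C] extends RegularCat C : Prop where
  equivRelEffective : ∀ {R X : C} (r₁ r₂ : R ⟶ X), IsEquivRel r₁ r₂ →
    ∃ (Y : C) (f : X ⟶ Y), IsKernelPair f r₁ r₂

section DoubleExt
variable [HasFiniteLimits C]

/-- A double extension: a commutative square `αt ≫ fB = fA ≫ αb` of regular epimorphisms
whose comparison morphism to the pullback is also a regular epimorphism. -/
structure IsDoubleExt {A₁ A₀ B₁ B₀ : C} (fA : A₁ ⟶ A₀) (fB : B₁ ⟶ B₀)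
    (αt : A₁ ⟶ B₁) (αb : A₀ ⟶ B₀) : Prop where
  w : αt ≫ fB = fA ≫ αb
  left : IsRegEpi fA
  right : IsRegEpi fB
  top : IsRegEpi αt
  bot : IsRegEpi αb
  comparison : IsRegEpi (pullback.lift fA αt w.symm : A₁ ⟶ pullback αb fB)

end DoubleExt

/-- The category `Ext C` of extensions: the full subcategory of the arrow category of `C`
determined by the regular epimorphisms. -/
abbrev ExtCat (C : Type u) [Category.{v} C] : Type max u v :=
  ObjectProperty.FullSubcategory (fun f : Arrow C => IsRegEpi f.hom)

/-- An object of `Ext C` from a regular epimorphism. -/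
def ExtCat.mk' {X Y : C} (f : X ⟶ Y) (hf : IsRegEpi f) : ExtCat C :=
  ⟨Arrow.mk f, hf⟩

/-- The top (domain) component of a morphism of `Ext C`. -/
def ExtCat.homLeft {f g : ExtCat C} (φ : f ⟶ g) : f.obj.left ⟶ g.obj.left :=
  CommaMorphism.left φ.hom

/-- The bottom (codomain) component of a morphism of `Ext C`. -/
def ExtCat.homRight {f g : ExtCat C} (φ : f ⟶ g) : f.obj.right ⟶ g.obj.right :=
  CommaMorphism.right φ.hom

lemma ExtCat.homLeft_comp {f g h : ExtCat C} (a : f ⟶ g) (b : g ⟶ h) :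
    ExtCat.homLeft (a ≫ b) = ExtCat.homLeft a ≫ ExtCat.homLeft b := rfl

lemma ExtCat.homRight_comp {f g h : ExtCat C} (a : f ⟶ g) (b : g ⟶ h) :
    ExtCat.homRight (a ≫ b) = ExtCat.homRight a ≫ ExtCat.homRight b := rfl

lemma ExtCat.hom_w {f g : ExtCat C} (φ : f ⟶ g) :
    ExtCat.homLeft φ ≫ g.obj.hom = f.obj.hom ≫ ExtCat.homRight φ :=
  CommaMorphism.w φ.hom

/-- A morphism of `Ext C` from a commutative square in `C`. -/
def ExtCat.homMk' {X₁ X₀ Y₁ Y₀ : C} {f : X₁ ⟶ X₀} {g : Y₁ ⟶ Y₀}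
    {hf : IsRegEpi f} {hg : IsRegEpi g}
    (u : X₁ ⟶ Y₁) (v : X₀ ⟶ Y₀) (w : u ≫ g = f ≫ v) :
    ExtCat.mk' f hf ⟶ ExtCat.mk' g hg :=
  ⟨Arrow.homMk (u := u) (v := v) w⟩

/-- A (commutative) square in `C`, with left vertical `left : A₁ ⟶ A₀`, right vertical
`right : B₁ ⟶ B₀`, top horizontal `top : A₁ ⟶ B₁` and bottom horizontal `bot : A₀ ⟶ B₀`. -/
structure Sq (C : Type u) [Category.{v} C] where
  A₁ : C
  A₀ : C
  B₁ : C
  B₀ : C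
  left : A₁ ⟶ A₀
  right : B₁ ⟶ B₀
  top : A₁ ⟶ B₁
  bot : A₀ ⟶ B₀
  w : top ≫ right = left ≫ bot

/-- The square is a double extension. -/
def Sq.IsDE [HasFiniteLimits C] (s : Sq C) : Prop :=
  IsDoubleExt s.left s.right s.top s.bot

/-- A commutative cube, presented as a morphism of squares `Φ : s ⟶ t`. -/
structure SqHom (s t : Sq C) where
  h₁₁ : s.A₁ ⟶ t.A₁
  h₁₀ : s.A₀ ⟶ t.A₀
  h₀₁ : s.B₁ ⟶ t.B₁
  h₀₀ : s.B₀ ⟶ t.B₀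
  wA : h₁₁ ≫ t.left = s.left ≫ h₁₀
  wB : h₀₁ ≫ t.right = s.right ≫ h₀₀
  wt : h₁₁ ≫ t.top = s.top ≫ h₀₁
  wb : h₁₀ ≫ t.bot = s.bot ≫ h₀₀

/-- Composition of cubes (as morphisms of squares). -/
def SqHom.comp {s t u : Sq C} (Φ : SqHom s t) (Ψ : SqHom t u) : SqHom s u where
  h₁₁ := Φ.h₁₁ ≫ Ψ.h₁₁
  h₁₀ := Φ.h₁₀ ≫ Ψ.h₁₀
  h₀₁ := Φ.h₀₁ ≫ Ψ.h₀₁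
  h₀₀ := Φ.h₀₀ ≫ Ψ.h₀₀
  wA := by rw [Category.assoc, Ψ.wA, ← Category.assoc, Φ.wA, Category.assoc]
  wB := by rw [Category.assoc, Ψ.wB, ← Category.assoc, Φ.wB, Category.assoc]
  wt := by rw [Category.assoc, Ψ.wt, ← Category.assoc, Φ.wt, Category.assoc]
  wb := by rw [Category.assoc, Ψ.wb, ← Category.assoc, Φ.wb, Category.assoc]

section Cube
variable [HasFiniteLimits C]

/-- Seen as a morphism `(σ, β) : s ⟶ t` between the double extensions `s` (as the arrow
`s.left → s.right`) and `t`, the face `σ` of the cube: the square from `s.left` to `t.left`. -/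
def SqHom.sigmaSq {s t : Sq C} (Φ : SqHom s t) : Sq C where
  A₁ := s.A₁
  A₀ := s.A₀
  B₁ := t.A₁
  B₀ := t.A₀
  left := s.left
  right := t.left
  top := Φ.h₁₁
  bot := Φ.h₁₀
  w := Φ.wA

/-- The face `β` of the cube: the square from `s.right` to `t.right`. -/
def SqHom.betaSq {s t : Sq C} (Φ : SqHom s t) : Sq C where
  A₁ := s.B₁
  A₀ := s.B₀
  B₁ := t.B₁
  B₀ := t.B₀
  left := s.right
  right := t.right
  top := Φ.h₀₁
  bot := Φ.h₀₀
  w := Φ.wB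

/-- Top component of the componentwise pullback of `t` (i.e. `α`) and `betaSq Φ` (i.e. `β`). -/
noncomputable def SqHom.P₁ {s t : Sq C} (Φ : SqHom s t) : C := pullback t.top Φ.h₀₁

/-- Bottom component of the componentwise pullback of `α` and `β`. -/
noncomputable def SqHom.P₀ {s t : Sq C} (Φ : SqHom s t) : C := pullback t.bot Φ.h₀₀

/-- The induced arrow between the components of the componentwise pullback of `α` and `β`. -/
noncomputable def SqHom.fP {s t : Sq C} (Φ : SqHom s t) : Φ.P₁ ⟶ Φ.P₀ :=
  pullback.map t.top Φ.h₀₁ t.bot Φ.h₀₀ t.left s.right t.right t.w Φ.wB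

/-- The top comparison morphism. -/
noncomputable def SqHom.c₁ {s t : Sq C} (Φ : SqHom s t) : s.A₁ ⟶ Φ.P₁ :=
  pullback.lift Φ.h₁₁ s.top Φ.wt

/-- The bottom comparison morphism. -/
noncomputable def SqHom.c₀ {s t : Sq C} (Φ : SqHom s t) : s.A₀ ⟶ Φ.P₀ :=
  pullback.lift Φ.h₁₀ s.bot Φ.wb

lemma SqHom.comp_w {s t : Sq C} (Φ : SqHom s t) : Φ.c₁ ≫ Φ.fP = s.left ≫ Φ.c₀ := by
  apply pullback.hom_ext
  · simp only [SqHom.c₁, SqHom.c₀, SqHom.fP, SqHom.P₀, SqHom.P₁, Category.assoc]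
    erw [pullback.lift_fst, pullback.lift_fst_assoc, pullback.lift_fst]
    exact Φ.wA
  · simp only [SqHom.c₁, SqHom.c₀, SqHom.fP, SqHom.P₀, SqHom.P₁, Category.assoc]
    erw [pullback.lift_snd, pullback.lift_snd_assoc, pullback.lift_snd]
    exact s.w

/-- The comparison square of the cube `Φ`, from `s.left` to the componentwise pullback
of `α` and `β`. -/
noncomputable def SqHom.compSq {s t : Sq C} (Φ : SqHom s t) : Sq C where
  A₁ := s.A₁
  A₀ := s.A₀
  B₁ := Φ.P₁
  B₀ := Φ.P₀
  left := s.left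
  right := Φ.fP
  top := Φ.c₁
  bot := Φ.c₀
  w := Φ.comp_w

/-- A `3`-cubical extension: the two opposite faces `γ = s` and `α = t`, the two connecting
faces `σ` and `β`, and the comparison square to the componentwise pullback of `α` and `β`
are all double extensions. -/
def SqHom.Is3CubExt {s t : Sq C} (Φ : SqHom s t) : Prop :=
  s.IsDE ∧ t.IsDE ∧ Φ.sigmaSq.IsDE ∧ Φ.betaSq.IsDE ∧ Φ.compSq.IsDE

end Cube

/-- The cube `Φ : s ⟶ t` is a limit cube: the cone from the initial vertex `s.A₁` on the
diagram formed by the remaining seven vertices is a limit cone. -/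
def SqHom.IsLimitCube {s t : Sq C} (Φ : SqHom s t) : Prop :=
  ∀ (W : C) (wA₀ : W ⟶ s.A₀) (wB₁ : W ⟶ s.B₁) (wtA₁ : W ⟶ t.A₁),
    wA₀ ≫ s.bot = wB₁ ≫ s.right →
    wA₀ ≫ Φ.h₁₀ = wtA₁ ≫ t.left →
    wB₁ ≫ Φ.h₀₁ = wtA₁ ≫ t.top →
    ∃! u : W ⟶ s.A₁, u ≫ s.left = wA₀ ∧ u ≫ s.top = wB₁ ∧ u ≫ Φ.h₁₁ = wtA₁

/-- A discrete fibration (of order 3): a `3`-cubical extension which is a limit cube. -/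
def SqHom.IsDiscFib [HasFiniteLimits C] {s t : Sq C} (Φ : SqHom s t) : Prop :=
  Φ.Is3CubExt ∧ Φ.IsLimitCube
section Galois
variable [HasFiniteLimits C]

/-- A strongly E-Birkhoff Galois structure on `C`: a full replete reflective subcategory
(given by the predicate `inB`, the reflector `F` and the unit `η`) such that every unit
component is a regular epimorphism and every naturality square of the unit at a regular
epimorphism is a double extension. -/
structure BirkhoffStructure (C : Type u) [Category.{v} C] [HasFiniteLimits C] where
  inB : C → Prop
  replete : ∀ {X Y : C}, inB X → (X ≅ Y) → inB Y
  F : C ⥤ C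
  η : 𝟭 C ⟶ F
  obj_inB : ∀ A : C, inB (F.obj A)
  unit_regEpi : ∀ A : C, IsRegEpi (η.app A)
  univ : ∀ {A X : C}, inB X → ∀ g : A ⟶ X, ∃! h : F.obj A ⟶ X, η.app A ≫ h = g
  stronglyBirkhoff : ∀ {A B : C} (f : A ⟶ B), IsRegEpi f →
    IsDoubleExt f (F.map f) (η.app A) (η.app B)

/-- A trivial covering: a regular epimorphism whose unit naturality square is a pullback. -/
def TrivialCovering (G : BirkhoffStructure C) {T E : C} (t : T ⟶ E) : Prop :=
  IsRegEpi t ∧ IsPullback (G.η.app T) t (G.F.map t) (G.η.app E)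

/-- A covering: a regular epimorphism whose pullback along some regular epimorphism is a
trivial covering. -/
def Covering (G : BirkhoffStructure C) {A B : C} (c : A ⟶ B) : Prop :=
  IsRegEpi c ∧ ∃ (E : C) (e : E ⟶ B), IsRegEpi e ∧ TrivialCovering G (pullback.snd c e)

end Galois

/-- The underlying square in `C` of a morphism of `Ext C`. -/
def sqOfHom {f g : ExtCat C} (φ : f ⟶ g) : Sq C where
  A₁ := f.obj.left
  A₀ := f.obj.right
  B₁ := g.obj.left
  B₀ := g.obj.right
  left := f.obj.hom
  right := g.obj.hom
  top := ExtCat.homLeft φ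
  bot := ExtCat.homRight φ
  w := ExtCat.hom_w φ

/-- The underlying cube in `C` of a naturality square in `Ext C` of a natural
transformation `η₁ : 𝟭 (Ext C) ⟶ F₁` at a morphism `φ : f ⟶ g` of `Ext C`. -/
def natCube (F₁ : ExtCat C ⥤ ExtCat C) (η₁ : 𝟭 (ExtCat C) ⟶ F₁) {f g : ExtCat C}
    (φ : f ⟶ g) : SqHom (sqOfHom φ) (sqOfHom (F₁.map φ)) where
  h₁₁ := ExtCat.homLeft (η₁.app f)
  h₁₀ := ExtCat.homRight (η₁.app f)
  h₀₁ := ExtCat.homLeft (η₁.app g)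
  h₀₀ := ExtCat.homRight (η₁.app g)
  wA := ExtCat.hom_w (η₁.app f)
  wB := ExtCat.hom_w (η₁.app g)
  wt := by
    have h := congrArg ExtCat.homLeft (η₁.naturality φ)
    rw [ExtCat.homLeft_comp, ExtCat.homLeft_comp] at h
    exact h.symm
  wb := by
    have h := congrArg ExtCat.homRight (η₁.naturality φ)
    rw [ExtCat.homRight_comp, ExtCat.homRight_comp] at h
    exact h.symm

section LevelOne
variable [HasFiniteLimits C]

/-- The level-one Galois structure induced by a strongly E-Birkhoff Galois structure `G`:
the coverings form a reflective subcategory of `Ext C`, with reflector `F₁` and unit `η₁`,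
every unit component is a double extension, and the reflection is strongly E₂-Birkhoff. -/
structure LevelOne (G : BirkhoffStructure C) where
  F₁ : ExtCat C ⥤ ExtCat C
  η₁ : 𝟭 (ExtCat C) ⟶ F₁
  obj_cov : ∀ f : ExtCat C, Covering G (F₁.obj f).obj.hom
  univ : ∀ {f x : ExtCat C}, Covering G x.obj.hom → ∀ g : f ⟶ x,
    ∃! h : F₁.obj f ⟶ x, η₁.app f ≫ h = g
  unit_DE : ∀ f : ExtCat C, (sqOfHom (η₁.app f)).IsDE
  stronglyBirkhoff : ∀ {f g : ExtCat C} (φ : f ⟶ g), (sqOfHom φ).IsDE →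
    (natCube F₁ η₁ φ).Is3CubExt

/-- A trivial double covering: a morphism of `Ext C` whose underlying square is a double
extension and whose `η₁`-naturality square is a pullback in `Ext C`. -/
def TrivDoubleCov {G : BirkhoffStructure C} (L : LevelOne G) {f g : ExtCat C}
    (φ : f ⟶ g) : Prop :=
  (sqOfHom φ).IsDE ∧ IsPullback (L.η₁.app f) φ (L.F₁.map φ) (L.η₁.app g)

/-- A double covering: a double extension `α : d ⟶ c` in `Ext C` such that the pullback of
`α` along some double extension `γ : e ⟶ c` is a trivial double covering. -/
def DoubleCov {G : BirkhoffStructure C} (L : LevelOne G) {d c : ExtCat C}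
    (α : d ⟶ c) : Prop :=
  (sqOfHom α).IsDE ∧ ∃ (e : ExtCat C) (γ : e ⟶ c), (sqOfHom γ).IsDE ∧
    ∃ (p : ExtCat C) (pγ : p ⟶ e) (pα : p ⟶ d),
      IsPullback pγ pα γ α ∧ TrivDoubleCov L pγ

end LevelOne

/-! In `Ext C` kernel pairs and coequalizers of such pairs can be computed componentwise, so the
only point that is not formal is that the induced map `f : Eq(σt) ⟶ Eq(σb)` is again a regular
epimorphism, i.e. an object of `Ext C`. It is: `f` factors as a pullback of the comparison map
`E₁ ⟶ E₀ ×_{B₀} B₁` followed by a pullback of `fE`, and in a regular category regular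
epimorphisms are stable under pullback and closed under composition. -/

lemma isRegEpi_iff_isRegularEpi {X Y : C} (f : X ⟶ Y) : IsRegEpi f ↔ IsRegularEpi f :=
  ⟨fun h => ⟨h⟩, fun h => h.1⟩

section Regular

variable [HasFiniteLimits C] [RegularCat C]

theorem RegularCat.regular : Regular C where
  hasCoequalizer_of_isKernelPair {_ _ _ f _ _} h :=
    have := RegularCat.hasCoeqOfKernelPairs f
    hasColimit_of_iso (F := parallelPair (pullback.fst f f) (pullback.snd f f))
      (parallelPair.ext h.isoPullback (Iso.refl _))
  regularEpiIsStableUnderBaseChange := .mk' fun _ _ _ f g _ hg => by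
    rw [← pullbackSymmetry_hom_comp_snd,
      (MorphismProperty.regularEpi C).cancel_left_of_respectsIso,
      MorphismProperty.regularEpi_iff, ← isRegEpi_iff_isRegularEpi]
    exact RegularCat.regEpiPullbackStable g f ((isRegEpi_iff_isRegularEpi g).2 hg)

theorem IsRegEpi.comp {X Y Z : C} {f : X ⟶ Y} {g : Y ⟶ Z} (hf : IsRegEpi f)
    (hg : IsRegEpi g) : IsRegEpi (f ≫ g) := by
  -- regular epis are strong, strong epis compose, and in a regular category they are regular
  have := RegularCat.regular (C := C)
  have : IsRegularEpi f := ⟨hf⟩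
  have : IsRegularEpi g := ⟨hg⟩
  exact (isRegEpi_iff_isRegularEpi _).2 inferInstance

theorem IsRegEpi.of_isPullback {P X Y Z : C} {fst : P ⟶ X} {snd : P ⟶ Y} {f : X ⟶ Z}
    {g : Y ⟶ Z} (h : IsPullback fst snd f g) (hf : IsRegEpi f) : IsRegEpi snd :=
  (isRegEpi_iff_isRegularEpi _).2 <|
    (RegularCat.regular (C := C)).regularEpiIsStableUnderBaseChange.of_isPullback h
      ((isRegEpi_iff_isRegularEpi _).1 hf)

end Regular

section KernelPair

attribute [local simp] pullback.lift_fst pullback.lift_snd pullback.lift_fst_assoc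
  pullback.lift_snd_assoc

variable [HasFiniteLimits C] {E₁ E₀ B₁ B₀ : C} {fE : E₁ ⟶ E₀} {fB : B₁ ⟶ B₀}
  {σt : E₁ ⟶ B₁} {σb : E₀ ⟶ B₀}

/-- With `P = E₁ ×_{E₀} Eq(σb)` and `Q = E₀ ×_{B₀} B₁`, the map `P ⟶ Q` sending
`(x, (a, b))` to `(a, σt x)` exhibits `P` as the pullback of `Q ⟶ B₁` along `σt`. -/
theorem isPullback_kernelPair_comparison (w : σt ≫ fB = fE ≫ σb) :
    IsPullback
      (pullback.lift (f := σb) (g := fB)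
        (pullback.snd fE (pullback.snd σb σb) ≫ pullback.fst σb σb)
        (pullback.fst fE (pullback.snd σb σb) ≫ σt)
        (by simp [pullback.condition, ← pullback.condition_assoc, w]))
      (pullback.fst fE (pullback.snd σb σb)) (pullback.snd σb fB) σt := by
  have outer := (IsPullback.of_hasPullback fE (pullback.snd σb σb)).flip.paste_horiz
    (IsPullback.of_hasPullback σb σb)
  refine IsPullback.of_right (h₁₂ := pullback.fst σb fB) (h₂₂ := fB) ?_ (by simp)
    (IsPullback.of_hasPullback σb fB)
  simpa [w] using outer

theorem IsDoubleExt.isRegEpi_kernelPair_map [RegularCat C] (hσ : IsDoubleExt fE fB σt σb) :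
    IsRegEpi (pullback.map σt σt σb σb fE fE fB hσ.w hσ.w) := by
  set m := pullback.lift (f := fE) (g := pullback.snd σb σb) (pullback.snd σt σt)
    (pullback.map σt σt σb σb fE fE fB hσ.w hσ.w) (by simp)
  have hm := IsPullback.of_bot (v₁₁ := m) (v₁₂ := pullback.lift fE σt hσ.w.symm)
    (by simpa [m] using IsPullback.of_hasPullback σt σt)
    (by ext <;> simp [m, pullback.condition]) (isPullback_kernelPair_comparison hσ.w)
  have := (IsRegEpi.of_isPullback hm hσ.comparison).comp
    (RegularCat.regEpiPullbackStable fE (pullback.snd σb σb) hσ.left)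
  simpa [m] using this

end KernelPair

namespace ExtCat

@[ext]
theorem hom_ext {f g : ExtCat C} {a b : f ⟶ g} (hl : homLeft a = homLeft b)
    (hr : homRight a = homRight b) : a = b :=
  ObjectProperty.hom_ext (h := CommaMorphism.ext hl hr)

theorem isPullback_of_isPullback_homLeft_homRight {P X Y Z : ExtCat C} {fst : P ⟶ X}
    {snd : P ⟶ Y} {f : X ⟶ Z} {g : Y ⟶ Z} (w : fst ≫ f = snd ≫ g)
    (hl : IsPullback (homLeft fst) (homLeft snd) (homLeft f) (homLeft g))
    (hr : IsPullback (homRight fst) (homRight snd) (homRight f) (homRight g)) :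
    IsPullback fst snd f g := by
  refine .of_isLimit <| PullbackCone.IsLimit.mk w
    (fun s => ObjectProperty.homMk <| Arrow.homMk
      (hl.lift (homLeft s.fst) (homLeft s.snd)
        (by rw [← homLeft_comp, ← homLeft_comp, s.condition]))
      (hr.lift (homRight s.fst) (homRight s.snd)
        (by rw [← homRight_comp, ← homRight_comp, s.condition])) ?_)
    (fun s => ?_) (fun s => ?_) (fun s m h₁ h₂ => ?_)
  · apply hr.hom_ext
    · rw [Category.assoc, Category.assoc, hr.lift_fst, ← hom_w fst, ← hom_w s.fst,
        hl.lift_fst_assoc]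
    · rw [Category.assoc, Category.assoc, hr.lift_snd, ← hom_w snd, ← hom_w s.snd,
        hl.lift_snd_assoc]
  · ext
    · exact hl.lift_fst _ _ _
    · exact hr.lift_fst _ _ _
  · ext
    · exact hl.lift_snd _ _ _
    · exact hr.lift_snd _ _ _
  · ext
    · exact hl.hom_ext ((congrArg homLeft h₁).trans (hl.lift_fst _ _ _).symm)
        ((congrArg homLeft h₂).trans (hl.lift_snd _ _ _).symm)
    · exact hr.hom_ext ((congrArg homRight h₁).trans (hr.lift_fst _ _ _).symm)
        ((congrArg homRight h₂).trans (hr.lift_snd _ _ _).symm)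

def isColimitCoforkOfIsColimitHomLeftHomRight {W X Y : ExtCat C} {l r : W ⟶ X}
    {π : X ⟶ Y} (w : l ≫ π = r ≫ π)
    (hl : IsColimit (Cofork.ofπ (f := homLeft l) (g := homLeft r) (homLeft π)
      (congrArg homLeft w)))
    (hr : IsColimit (Cofork.ofπ (f := homRight l) (g := homRight r) (homRight π)
      (congrArg homRight w))) :
    IsColimit (Cofork.ofπ π w) := by
  have : Epi (homLeft π) := epi_of_isColimit_cofork hl
  refine Cofork.IsColimit.mk' _ fun s => ⟨ObjectProperty.homMk <| Arrow.homMk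
    (Cofork.IsColimit.desc hl (homLeft s.π) (congrArg homLeft s.condition))
    (Cofork.IsColimit.desc hr (homRight s.π) (congrArg homRight s.condition)) ?_, ?_,
    fun {m} hm => ?_⟩
  · rw [← cancel_epi (homLeft π)]
    refine (Cofork.IsColimit.π_desc'_assoc hl _ _ _).trans ?_
    dsimp only [Cofork.ofπ_pt]
    rw [hom_w, reassoc_of% hom_w π]
    exact congrArg (X.obj.hom ≫ ·) (Cofork.IsColimit.π_desc' hr _ _).symm
  · ext
    · exact Cofork.IsColimit.π_desc' hl _ _
    · exact Cofork.IsColimit.π_desc' hr _ _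
  · ext
    · exact Cofork.IsColimit.hom_ext hl
        ((congrArg homLeft hm).trans (Cofork.IsColimit.π_desc' hl _ _).symm)
    · exact Cofork.IsColimit.hom_ext hr
        ((congrArg homRight hm).trans (Cofork.IsColimit.π_desc' hr _ _).symm)

end ExtCat

/-- In a Barr exact category, for a double extension `σ : f_E → f_B`, the pair
of kernel-pair-projection squares is the kernel pair of `σ` in `Ext C`, `σ` is the
coequalizer in `Ext C` of this pair; in particular every double extension is a regular
epimorphism in `Ext C`. -/
theorem statement_3 {C : Type u} [Category.{v} C] [HasFiniteLimits C] [BarrExact C]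
    {E₁ E₀ B₁ B₀ : C}
    (fE : E₁ ⟶ E₀) (fB : B₁ ⟶ B₀) (σt : E₁ ⟶ B₁) (σb : E₀ ⟶ B₀)
    (hσ : IsDoubleExt fE fB σt σb)
    -- the induced morphism between the kernel pairs of `σt` and `σb`:
    (fR : pullback σt σt ⟶ pullback σb σb)
    (hfR : fR = pullback.map σt σt σb σb fE fE fB hσ.w hσ.w) :
    ∃ (hR : IsRegEpi fR)
      (wd : pullback.fst σt σt ≫ fE = fR ≫ pullback.fst σb σb)
      (wc : pullback.snd σt σt ≫ fE = fR ≫ pullback.snd σb σb)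
      (eq : (ExtCat.homMk' (hf := hR) (hg := hσ.left)
              (pullback.fst σt σt) (pullback.fst σb σb) wd) ≫
              ExtCat.homMk' (hf := hσ.left) (hg := hσ.right) σt σb hσ.w
          = (ExtCat.homMk' (hf := hR) (hg := hσ.left)
              (pullback.snd σt σt) (pullback.snd σb σb) wc) ≫
              ExtCat.homMk' σt σb hσ.w),
      -- `((d⊤,d⊥), (c⊤,c⊥))` is the kernel pair of `σ` in `Ext C`:
      IsKernelPair (ExtCat.homMk' (hf := hσ.left) (hg := hσ.right) σt σb hσ.w)
        (ExtCat.homMk' (hf := hR) (pullback.fst σt σt) (pullback.fst σb σb) wd)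
        (ExtCat.homMk' (hf := hR) (pullback.snd σt σt) (pullback.snd σb σb) wc) ∧
      -- `σ` is the coequalizer in `Ext C` of this parallel pair:
      Nonempty (IsColimit (Cofork.ofπ (ExtCat.homMk' (hf := hσ.left) (hg := hσ.right)
        σt σb hσ.w) eq)) ∧
      -- in particular, `σ` is a regular epimorphism in `Ext C`:
      Nonempty (RegularEpi (ExtCat.homMk' (hf := hσ.left) (hg := hσ.right) σt σb hσ.w)) := by
  subst hfR
  have : IsRegularEpi σt := ⟨hσ.top⟩
  have : IsRegularEpi σb := ⟨hσ.bot⟩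
  refine ⟨hσ.isRegEpi_kernelPair_map, (pullback.lift_fst _ _ _).symm,
    (pullback.lift_snd _ _ _).symm, ?eq,
    ExtCat.isPullback_of_isPullback_homLeft_homRight ?eq (.of_hasPullback σt σt)
      (.of_hasPullback σb σb), ⟨?coeq⟩, ⟨Cofork.IsColimit.regularEpi ?coeq⟩⟩
  · exact ExtCat.hom_ext pullback.condition pullback.condition
  · exact ExtCat.isColimitCoforkOfIsColimitHomLeftHomRight _
      (isColimitCoforkOfEffectiveEpi σt _ (pullback.isLimit σt σt))
      (isColimitCoforkOfEffectiveEpi σb _ (pullback.isLimit σb σb))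

end Paper
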